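/- Let n ≥ 10 and Y ⊆ [n] with |Y| = 9. Let A₂ and A₄ be families of 2-subsets and 4-subsets of Y respectively such that A₂ ∪ A₄ is intersecting (every member of A₂ intersects every member of A₂ ∪ A₄). If |A₂| ≥ 4, then A₂ is a star: all members of A₂ share a common element x, and every member of A₄ except at most one contains x. -/
import Mathlib

open Finset

lemma pair_struct {α : Type*} [DecidableEq α] {A : Finset α} (hA : A.card = 2)
    {x : α} (hx : x ∈ A) : ∃ a, a ≠ x ∧ A = {x, a} := by
  obtain ⟨u, v, huv, rfl⟩ := Finset.card_eq_two.mp hA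
  rcases Finset.mem_insert.mp hx with rfl | h
  · exact ⟨v, fun h => huv h.symm, rfl⟩
  · obtain rfl := Finset.mem_singleton.mp h
    exact ⟨u, fun h => huv h, Finset.pair_comm u x⟩

/-- Let `Y` be a 9-set in `[n]` (`n ≥ 10`), `A₂` a family of 2-subsets and `A₄` a
family of 4-subsets of `Y` such that every member of `A₂` meets every member of
`A₂ ∪ A₄`. If `|A₂| ≥ 4`, then `A₂` is a star with some center `x`, and all but at
most one member of `A₄` contain `x`. -/
theorem stmt_15 (n : ℕ) (hn : 10 ≤ n)
    (Y : Finset (Fin n)) (hY : Y.card = 9)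
    (A₂ A₄ : Finset (Finset (Fin n)))
    (hA₂ : A₂ ⊆ Y.powersetCard 2) (hA₄ : A₄ ⊆ Y.powersetCard 4)
    (hint : ∀ A ∈ A₂, ∀ B ∈ A₂ ∪ A₄, (A ∩ B).Nonempty)
    (hcard : 4 ≤ A₂.card) :
    ∃ x : Fin n, (∀ A ∈ A₂, x ∈ A) ∧ (A₄.filter (fun B => x ∉ B)).card ≤ 1 := by
  classical
  have h2 : ∀ A ∈ A₂, A.card = 2 := fun A hA => (Finset.mem_powersetCard.mp (hA₂ hA)).2
  have h4 : ∀ B ∈ A₄, B.card = 4 := fun B hB => (Finset.mem_powersetCard.mp (hA₄ hB)).2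
  obtain ⟨A, hA, B, hB, hAB⟩ := Finset.one_lt_card.mp (by omega : 1 < A₂.card)
  obtain ⟨x, hx⟩ := hint A hA B (Finset.mem_union_left _ hB)
  have hxA : x ∈ A := (Finset.mem_inter.mp hx).1
  have hxB : x ∈ B := (Finset.mem_inter.mp hx).2
  obtain ⟨a, hax, hAeq⟩ := pair_struct (h2 A hA) hxA
  obtain ⟨b, hbx, hBeq⟩ := pair_struct (h2 B hB) hxB
  have hab : a ≠ b := by rintro rfl; exact hAB (hAeq.trans hBeq.symm)
  -- any member of A₂ avoiding x must be {a, b}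
  have key : ∀ C ∈ A₂, x ∉ C → C = {a, b} := by
    intro C hC hxC
    have haC : a ∈ C := by
      obtain ⟨y, hy⟩ := hint C hC A (Finset.mem_union_left _ hA)
      have hyC := (Finset.mem_inter.mp hy).1
      have hyA := (Finset.mem_inter.mp hy).2
      rw [hAeq] at hyA
      rcases Finset.mem_insert.mp hyA with rfl | h
      · exact absurd hyC hxC
      · obtain rfl := Finset.mem_singleton.mp h; exact hyC
    have hbC : b ∈ C := by
      obtain ⟨y, hy⟩ := hint C hC B (Finset.mem_union_left _ hB)
      have hyC := (Finset.mem_inter.mp hy).1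
      have hyB := (Finset.mem_inter.mp hy).2
      rw [hBeq] at hyB
      rcases Finset.mem_insert.mp hyB with rfl | h
      · exact absurd hyC hxC
      · obtain rfl := Finset.mem_singleton.mp h; exact hyC
    have hsub : ({a, b} : Finset (Fin n)) ⊆ C := by
      intro z hz
      rcases Finset.mem_insert.mp hz with rfl | h
      · exact haC
      · obtain rfl := Finset.mem_singleton.mp h; exact hbC
    exact (Finset.eq_of_subset_of_card_le hsub
      (by rw [h2 C hC, Finset.card_insert_of_notMem (by simpa using hab),
        Finset.card_singleton])).symm
  -- A₂ is a star with center x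
  have hstar : ∀ C ∈ A₂, x ∈ C := by
    intro C hC
    by_contra hxC
    have hCeq := key C hC hxC
    -- find a fourth member D
    have hD : ∃ D ∈ A₂, D ∉ ({A, B, C} : Finset (Finset (Fin n))) := by
      by_contra h
      push_neg at h
      have hsub : A₂ ⊆ ({A, B, C} : Finset (Finset (Fin n))) := fun D hD => h D hD
      have h1 := Finset.card_le_card hsub
      have h2 := Finset.card_insert_le A ({B, C} : Finset (Finset (Fin n)))
      have h3 := Finset.card_insert_le B ({C} : Finset (Finset (Fin n)))
      simp only [Finset.card_singleton] at h3
      omega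
    obtain ⟨D, hDm, hDnot⟩ := hD
    simp only [Finset.mem_insert, Finset.mem_singleton, not_or] at hDnot
    obtain ⟨hDA, hDB, hDC⟩ := hDnot
    by_cases hxD : x ∈ D
    · obtain ⟨d, hdx, hDeq⟩ := pair_struct (h2 D hDm) hxD
      obtain ⟨w, hw⟩ := hint D hDm C (Finset.mem_union_left _ hC)
      have hwD := (Finset.mem_inter.mp hw).1
      have hwC := (Finset.mem_inter.mp hw).2
      rw [hCeq] at hwC
      rw [hDeq] at hwD
      have hwne : w ≠ x := by
        rintro rfl
        rcases Finset.mem_insert.mp hwC with rfl | h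
        · exact hax rfl
        · exact hbx (Finset.mem_singleton.mp h).symm
      have hwd : w = d := by
        rcases Finset.mem_insert.mp hwD with rfl | h
        · exact absurd rfl hwne
        · exact Finset.mem_singleton.mp h
      rcases Finset.mem_insert.mp hwC with rfl | h
      · exact hDA (by rw [hDeq, hAeq, hwd])
      · obtain rfl := Finset.mem_singleton.mp h
        exact hDB (by rw [hDeq, hBeq, hwd])
    · exact hDC ((key D hDm hxD).trans hCeq.symm)
  refine ⟨x, hstar, ?_⟩
  rw [Finset.card_le_one]
  intro B₁ hB₁ B₂ hB₂
  simp only [Finset.mem_filter] at hB₁ hB₂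
  obtain ⟨hB₁m, hxB₁⟩ := hB₁
  obtain ⟨hB₂m, hxB₂⟩ := hB₂
  set U : Finset (Fin n) := A₂.biUnion (fun A => A.erase x) with hU
  have hUsub : ∀ C ∈ A₄, x ∉ C → U ⊆ C := by
    intro C hCm hxC z hz
    rw [hU, Finset.mem_biUnion] at hz
    obtain ⟨A', hA', hzA'⟩ := hz
    obtain ⟨w, hw⟩ := hint A' hA' C (Finset.mem_union_right _ hCm)
    have hwA' := (Finset.mem_inter.mp hw).1
    have hwC := (Finset.mem_inter.mp hw).2
    have hwe : w ∈ A'.erase x :=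
      Finset.mem_erase.mpr ⟨fun h => hxC (h ▸ hwC), hwA'⟩
    have hcard1 : (A'.erase x).card = 1 := by
      rw [Finset.card_erase_of_mem (hstar A' hA'), h2 A' hA']
    have := Finset.card_le_one.mp (le_of_eq hcard1) z hzA' w hwe
    rwa [this]
  have hUcard : 4 ≤ U.card := by
    have hsub : A₂ ⊆ U.image (fun a => insert a {x}) := by
      intro A' hA'
      have hcard1 : (A'.erase x).card = 1 := by
        rw [Finset.card_erase_of_mem (hstar A' hA'), h2 A' hA']
      obtain ⟨a', ha'⟩ := Finset.card_eq_one.mp hcard1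
      have ha'U : a' ∈ U := by
        rw [hU, Finset.mem_biUnion]
        exact ⟨A', hA', by rw [ha']; exact Finset.mem_singleton_self a'⟩
      rw [Finset.mem_image]
      refine ⟨a', ha'U, ?_⟩
      rw [Finset.pair_comm, ← ha', Finset.insert_erase (hstar A' hA')]
    calc 4 ≤ A₂.card := hcard
      _ ≤ (U.image (fun a => insert a {x})).card := Finset.card_le_card hsub
      _ ≤ U.card := Finset.card_image_le
  have e1 : U = B₁ := Finset.eq_of_subset_of_card_le (hUsub B₁ hB₁m hxB₁)
    (by rw [h4 B₁ hB₁m]; exact hUcard)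
  have e2 : U = B₂ := Finset.eq_of_subset_of_card_le (hUsub B₂ hB₂m hxB₂)
    (by rw [h4 B₂ hB₂m]; exact hUcard)
  rw [← e1, ← e2]
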